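/- arXiv:0902.1873 — 2 statements merged into one kernel-verified Lean document; each statement's English description precedes it below -/
import Mathlib

section
/- Denote by (c(a,b),d(a,b)) the unique pair in [0,1]² satisfying G_1(a,c)−2(φ_1(c)−φ_1(a))/δx = G_2(d,b)−2(φ_2(b)−φ_2(d))/δx and π̃_1(c)∩π̃_2(d)≠∅. Then the maps (a,b)↦c(a,b) and (a,b)↦d(a,b) from [0,1]² to [0,1] are continuous, and each is nondecreasing with respect to each of its two arguments. -/
/-!
Write the transmission equation as `F₁ a c = F₂ d b`, where `F₁` is nondecreasing in `a` and
strictly decreasing in `c`, and `F₂` is strictly increasing in `d` and nonincreasing in `b`.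
Because the `π̃ᵢ` are monotone graphs, two connected pairs never cross: `c < c'` forces
`d ≤ d'`. Comparing the equations at `(a, b) ≤ (a', b')` then gives `c ≤ c'` and `d ≤ d'`.

For continuity, the connection condition is a finite Boolean combination of the closed conditions
`c ≤ 0`, `1 ≤ d`, `π₁ c ≤ π₂ d`, …, so the set of solutions `(a, b, c, d)` is closed. A map into
a compact set whose value at every point is the unique solution of a closed relation is
continuous.
-/

open Set

/-- The monotone graph `π̃` associated to an increasing capillary pressure function `π`. -/
def tildePi (π : ℝ → ℝ) (s : ℝ) : Set ℝ :=
  if s = 0 then Set.Iic (π 0) else if s = 1 then Set.Ici (π 1) else {π s}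

/-- The connection condition `π̃₁(c) ∩ π̃₂(d) ≠ ∅`. -/
def Connects (π₁ π₂ : ℝ → ℝ) (c d : ℝ) : Prop :=
  (tildePi π₁ c ∩ tildePi π₂ d).Nonempty

open Filter Topology

lemma continuousOn_of_isClosed_of_unique {X Y : Type*} [TopologicalSpace X] [TopologicalSpace Y]
    {f : X → Y} {s : Set X} {K : Set Y} {R : Set (X × Y)} (hK : IsCompact K) (hR : IsClosed R)
    (hfK : MapsTo f s K) (hfR : ∀ x ∈ s, (x, f x) ∈ R)
    (huniq : ∀ x ∈ s, ∀ y ∈ K, (x, y) ∈ R → y = f x) : ContinuousOn f s := by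
  intro x hx
  refine hK.tendsto_nhds_of_unique_mapClusterPt (eventually_nhdsWithin_of_forall hfK)
    fun y hyK hy => huniq x hx y hyK ?_
  refine hR.mem_of_mapClusterPt (f := fun x' => (x', f x')) ?_
    (eventually_nhdsWithin_of_forall (a := x) hfR)
  rw [((𝓝 x).basis_sets.prod_nhds (𝓝 y).basis_sets).mapClusterPt_iff_frequently]
  rintro ⟨U, V⟩ ⟨hU, hV⟩
  exact ((mapClusterPt_iff_frequently.mp hy V hV).and_eventually
    (mem_nhdsWithin_of_mem_nhds hU)).mono fun x' hx' => ⟨hx'.2, hx'.1⟩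

lemma le_and_le_of_transmission {α β : Type*} [LinearOrder α] [LinearOrder β] {s : Set α}
    {F₁ F₂ : α → α → β} {R : α → α → Prop} {a a' b b' c c' d d' : α}
    (hF₁a : ∀ v ∈ s, MonotoneOn (F₁ · v) s) (hF₁c : ∀ u ∈ s, StrictAntiOn (F₁ u) s)
    (hF₂d : ∀ v ∈ s, StrictMonoOn (F₂ · v) s) (hF₂b : ∀ u ∈ s, AntitoneOn (F₂ u) s)
    (hR : ∀ c ∈ s, ∀ d ∈ s, ∀ c' ∈ s, ∀ d' ∈ s, R c d → R c' d' → c < c' → d ≤ d')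
    (ha : a ∈ s) (ha' : a' ∈ s) (hb : b ∈ s) (hb' : b' ∈ s)
    (hc : c ∈ s) (hc' : c' ∈ s) (hd : d ∈ s) (hd' : d' ∈ s) (haa' : a ≤ a') (hbb' : b ≤ b')
    (h : F₁ a c = F₂ d b) (h' : F₁ a' c' = F₂ d' b') (hRcd : R c d) (hRcd' : R c' d') :
    c ≤ c' ∧ d ≤ d' := by
  constructor
  · by_contra! hlt
    have hdd' : d < d' := (hF₂d b hb).lt_iff_lt hd hd' |>.mp <| calc
      F₂ d b = F₁ a c := h.symm
      _ ≤ F₁ a' c := hF₁a c hc ha ha' haa'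
      _ < F₁ a' c' := hF₁c a' ha' hc' hc hlt
      _ = F₂ d' b' := h'
      _ ≤ F₂ d' b := hF₂b d' hd' hb hb' hbb'
    exact (hR c' hc' d' hd' c hc d hd hRcd' hRcd hlt).not_gt hdd'
  · by_contra! hlt
    have hcc' : c < c' := (hF₁c a' ha').lt_iff_gt hc' hc |>.mp <| calc
      F₁ a' c' = F₂ d' b' := h'
      _ < F₂ d b' := hF₂d b' hb' hd' hd hlt
      _ ≤ F₂ d b := hF₂b d hd hb hb' hbb'
      _ = F₁ a c := h.symm
      _ ≤ F₁ a' c := hF₁a c hc ha ha' haa'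
    exact (hR c hc d hd c' hc' d' hd' hRcd hRcd' hcc').not_gt hlt

/-- `π̃ π s` is the interval with both endpoints `π s`, except that the lower one is `-∞` at
`s = 0` and the upper one is `+∞` at `s = 1`. -/
lemma connects_iff {π₁ π₂ : ℝ → ℝ} {c d : ℝ} (hc : c ∈ Icc (0 : ℝ) 1) (hd : d ∈ Icc (0 : ℝ) 1) :
    Connects π₁ π₂ c d ↔
      (c ≤ 0 ∨ 1 ≤ d ∨ π₁ c ≤ π₂ d) ∧ (d ≤ 0 ∨ 1 ≤ c ∨ π₂ d ≤ π₁ c) := by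
  obtain ⟨hc0, hc1⟩ := hc
  obtain ⟨hd0, hd1⟩ := hd
  unfold Connects tildePi
  split_ifs <;> subst_vars <;>
    simp [Iic_inter_Iic, Ici_inter_Ici, Iic_inter_Ici, Ici_inter_Iic] <;> grind

lemma Connects.le_of_lt {π₁ π₂ : ℝ → ℝ} (hπ₁ : StrictMonoOn π₁ (Icc 0 1))
    (hπ₂ : StrictMonoOn π₂ (Icc 0 1)) {c d c' d' : ℝ}
    (hc : c ∈ Icc (0 : ℝ) 1) (hd : d ∈ Icc (0 : ℝ) 1)
    (hc' : c' ∈ Icc (0 : ℝ) 1) (hd' : d' ∈ Icc (0 : ℝ) 1)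
    (h : Connects π₁ π₂ c d) (h' : Connects π₁ π₂ c' d') (hcc' : c < c') : d ≤ d' := by
  by_contra! hdd'
  have h₁ := ((connects_iff hc hd).mp h).2
  have h₂ := ((connects_iff hc' hd').mp h').1
  have hπc : π₁ c < π₁ c' := hπ₁ hc hc' hcc'
  have hπd : π₂ d' < π₂ d := hπ₂ hd' hd hdd'
  rcases h₁ with h₁ | h₁ | h₁ <;> rcases h₂ with h₂ | h₂ | h₂ <;>
    linarith [hc.1, hc'.2, hd.2, hd'.1]

lemma isClosed_setOf_connects {π₁ π₂ : ℝ → ℝ} (hπ₁ : ContinuousOn π₁ (Icc 0 1))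
    (hπ₂ : ContinuousOn π₂ (Icc 0 1)) :
    IsClosed {q : ℝ × ℝ | q ∈ Icc 0 1 ×ˢ Icc 0 1 ∧ Connects π₁ π₂ q.1 q.2} := by
  have hB : IsClosed (Icc (0 : ℝ) 1 ×ˢ Icc (0 : ℝ) 1) := isClosed_Icc.prod isClosed_Icc
  have hfst : ContinuousOn (fun q : ℝ × ℝ => q.1) (Icc 0 1 ×ˢ Icc 0 1) := continuousOn_fst
  have hsnd : ContinuousOn (fun q : ℝ × ℝ => q.2) (Icc 0 1 ×ˢ Icc 0 1) := continuousOn_snd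
  have hπ₁' := hπ₁.comp hfst fun q hq => hq.1
  have hπ₂' := hπ₂.comp hsnd fun q hq => hq.2
  have h0 := continuousOn_const (c := (0 : ℝ)) (s := Icc (0 : ℝ) 1 ×ˢ Icc (0 : ℝ) 1)
  have h1 := continuousOn_const (c := (1 : ℝ)) (s := Icc (0 : ℝ) 1 ×ˢ Icc (0 : ℝ) 1)
  convert (((hB.isClosed_le hfst h0).union (hB.isClosed_le h1 hsnd)).union
    (hB.isClosed_le hπ₁' hπ₂')).inter (((hB.isClosed_le hsnd h0).union
      (hB.isClosed_le h1 hfst)).union (hB.isClosed_le hπ₂' hπ₁')) using 1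
  ext q
  simp only [mem_inter_iff, mem_union, mem_ofPred_eq, Function.comp_apply]
  by_cases hq : q ∈ Icc 0 1 ×ˢ Icc 0 1
  · rw [connects_iff hq.1 hq.2]
    tauto
  · tauto

/-- Both sides of the transmission equation have this form: the left one is
`interfaceFlux G₁ φ₁ δx a c` and the right one `interfaceFlux G₂ φ₂ δx d b`. -/
noncomputable def interfaceFlux (G : ℝ → ℝ → ℝ) (φ : ℝ → ℝ) (δx u v : ℝ) : ℝ :=
  G u v - 2 * (φ v - φ u) / δx

section InterfaceFlux

variable {G : ℝ → ℝ → ℝ} {φ : ℝ → ℝ} {δx : ℝ} {s : Set ℝ}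

lemma strictMonoOn_interfaceFlux_left (hδx : 0 < δx) (hφ : StrictMonoOn φ s) {v : ℝ}
    (hG : MonotoneOn (G · v) s) : StrictMonoOn (interfaceFlux G φ δx · v) s := by
  intro u hu u' hu' huu'
  have hGuu' : G u v ≤ G u' v := hG hu hu' huu'.le
  have : 2 * (φ v - φ u') / δx < 2 * (φ v - φ u) / δx := by
    gcongr
    exact hφ hu hu' huu'
  simp only [interfaceFlux]
  linarith

lemma strictAntiOn_interfaceFlux_right (hδx : 0 < δx) (hφ : StrictMonoOn φ s) {u : ℝ}
    (hG : AntitoneOn (G u) s) : StrictAntiOn (interfaceFlux G φ δx u) s := by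
  intro v hv v' hv' hvv'
  have hGvv' : G u v' ≤ G u v := hG hv hv' hvv'.le
  have : 2 * (φ v - φ u) / δx < 2 * (φ v' - φ u) / δx := by
    gcongr
    exact hφ hv hv' hvv'
  simp only [interfaceFlux]
  linarith

lemma continuousOn_interfaceFlux (hG : ContinuousOn (fun p : ℝ × ℝ => G p.1 p.2) (s ×ˢ s))
    (hφ : ContinuousOn φ s) :
    ContinuousOn (fun p : ℝ × ℝ => interfaceFlux G φ δx p.1 p.2) (s ×ˢ s) :=
  hG.sub ((((hφ.comp continuousOn_snd fun _ hp => hp.2).sub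
    (hφ.comp continuousOn_fst fun _ hp => hp.1)).const_smul (2 : ℝ)).div_const δx)

end InterfaceFlux

lemma isClosed_setOf_transmission {G₁ G₂ : ℝ → ℝ → ℝ} {φ₁ φ₂ π₁ π₂ : ℝ → ℝ} {δx : ℝ}
    (hG₁ : ContinuousOn (fun p : ℝ × ℝ => G₁ p.1 p.2) (Icc 0 1 ×ˢ Icc 0 1))
    (hG₂ : ContinuousOn (fun p : ℝ × ℝ => G₂ p.1 p.2) (Icc 0 1 ×ˢ Icc 0 1))
    (hφ₁ : ContinuousOn φ₁ (Icc 0 1)) (hφ₂ : ContinuousOn φ₂ (Icc 0 1))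
    (hπ₁ : ContinuousOn π₁ (Icc 0 1)) (hπ₂ : ContinuousOn π₂ (Icc 0 1)) :
    IsClosed {z : (ℝ × ℝ) × ℝ × ℝ | z.1 ∈ Icc 0 1 ×ˢ Icc 0 1 ∧ z.2 ∈ Icc 0 1 ×ˢ Icc 0 1 ∧
      interfaceFlux G₁ φ₁ δx z.1.1 z.2.1 = interfaceFlux G₂ φ₂ δx z.2.2 z.1.2 ∧
      Connects π₁ π₂ z.2.1 z.2.2} := by
  have hB : IsClosed (Icc (0 : ℝ) 1 ×ˢ Icc (0 : ℝ) 1) := isClosed_Icc.prod isClosed_Icc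
  have hF₁ : ContinuousOn (fun z : (ℝ × ℝ) × ℝ × ℝ => interfaceFlux G₁ φ₁ δx z.1.1 z.2.1)
      ((Icc 0 1 ×ˢ Icc 0 1) ×ˢ Icc 0 1 ×ˢ Icc 0 1) :=
    (continuousOn_interfaceFlux hG₁ hφ₁).comp
      (f := fun z : (ℝ × ℝ) × ℝ × ℝ => (z.1.1, z.2.1)) (by fun_prop) fun z hz => ⟨hz.1.1, hz.2.1⟩
  have hF₂ : ContinuousOn (fun z : (ℝ × ℝ) × ℝ × ℝ => interfaceFlux G₂ φ₂ δx z.2.2 z.1.2)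
      ((Icc 0 1 ×ˢ Icc 0 1) ×ˢ Icc 0 1 ×ˢ Icc 0 1) :=
    (continuousOn_interfaceFlux hG₂ hφ₂).comp
      (f := fun z : (ℝ × ℝ) × ℝ × ℝ => (z.2.2, z.1.2)) (by fun_prop) fun z hz => ⟨hz.2.2, hz.1.2⟩
  convert ((hB.prod hB).isClosed_eq hF₁ hF₂).inter
    ((isClosed_setOf_connects hπ₁ hπ₂).preimage continuous_snd) using 1
  ext z
  simp only [mem_inter_iff, mem_preimage, mem_prod, mem_ofPred_eq]
  tauto

theorem stmt1_general
    (π₁ π₂ φ₁ φ₂ : ℝ → ℝ) (G₁ G₂ : ℝ → ℝ → ℝ) (δx : ℝ) (hδx : 0 < δx)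
    (hπ₁mono : StrictMonoOn π₁ (Icc 0 1)) (hπ₁lip : ∃ K, LipschitzOnWith K π₁ (Icc 0 1))
    (hπ₂mono : StrictMonoOn π₂ (Icc 0 1)) (hπ₂lip : ∃ K, LipschitzOnWith K π₂ (Icc 0 1))
    (hφ₁mono : StrictMonoOn φ₁ (Icc 0 1)) (hφ₁lip : ∃ K, LipschitzOnWith K φ₁ (Icc 0 1))
    (hφ₂mono : StrictMonoOn φ₂ (Icc 0 1)) (hφ₂lip : ∃ K, LipschitzOnWith K φ₂ (Icc 0 1))
    (hG₁lip : ∃ K, LipschitzOnWith K (fun p : ℝ × ℝ => G₁ p.1 p.2) (Icc 0 1 ×ˢ Icc 0 1))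
    (hG₁mono : ∀ b ∈ Icc (0:ℝ) 1, MonotoneOn (fun a => G₁ a b) (Icc 0 1))
    (hG₁anti : ∀ a ∈ Icc (0:ℝ) 1, AntitoneOn (fun b => G₁ a b) (Icc 0 1))
    (hG₂lip : ∃ K, LipschitzOnWith K (fun p : ℝ × ℝ => G₂ p.1 p.2) (Icc 0 1 ×ˢ Icc 0 1))
    (hG₂mono : ∀ b ∈ Icc (0:ℝ) 1, MonotoneOn (fun a => G₂ a b) (Icc 0 1))
    (hG₂anti : ∀ a ∈ Icc (0:ℝ) 1, AntitoneOn (fun b => G₂ a b) (Icc 0 1))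
    (c d : ℝ → ℝ → ℝ)
    (hcd : ∀ a ∈ Icc (0:ℝ) 1, ∀ b ∈ Icc (0:ℝ) 1,
      c a b ∈ Icc (0:ℝ) 1 ∧ d a b ∈ Icc (0:ℝ) 1 ∧
      G₁ a (c a b) - 2 * (φ₁ (c a b) - φ₁ a) / δx
        = G₂ (d a b) b - 2 * (φ₂ b - φ₂ (d a b)) / δx ∧
      Connects π₁ π₂ (c a b) (d a b))
    (huniq : ∀ a ∈ Icc (0:ℝ) 1, ∀ b ∈ Icc (0:ℝ) 1, ∀ c' d' : ℝ,
      c' ∈ Icc (0:ℝ) 1 → d' ∈ Icc (0:ℝ) 1 →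
      G₁ a c' - 2 * (φ₁ c' - φ₁ a) / δx = G₂ d' b - 2 * (φ₂ b - φ₂ d') / δx →
      Connects π₁ π₂ c' d' → c' = c a b ∧ d' = d a b) :
    ContinuousOn (fun p : ℝ × ℝ => c p.1 p.2) (Icc 0 1 ×ˢ Icc 0 1) ∧
    ContinuousOn (fun p : ℝ × ℝ => d p.1 p.2) (Icc 0 1 ×ˢ Icc 0 1) ∧
    (∀ b ∈ Icc (0:ℝ) 1, MonotoneOn (fun a => c a b) (Icc 0 1)) ∧
    (∀ a ∈ Icc (0:ℝ) 1, MonotoneOn (fun b => c a b) (Icc 0 1)) ∧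
    (∀ b ∈ Icc (0:ℝ) 1, MonotoneOn (fun a => d a b) (Icc 0 1)) ∧
    (∀ a ∈ Icc (0:ℝ) 1, MonotoneOn (fun b => d a b) (Icc 0 1)) := by
  obtain ⟨_, hπ₁lip⟩ := hπ₁lip
  obtain ⟨_, hπ₂lip⟩ := hπ₂lip
  obtain ⟨_, hφ₁lip⟩ := hφ₁lip
  obtain ⟨_, hφ₂lip⟩ := hφ₂lip
  obtain ⟨_, hG₁lip⟩ := hG₁lip
  obtain ⟨_, hG₂lip⟩ := hG₂lip
  have hmono : ∀ a ∈ Icc (0:ℝ) 1, ∀ a' ∈ Icc (0:ℝ) 1, ∀ b ∈ Icc (0:ℝ) 1, ∀ b' ∈ Icc (0:ℝ) 1,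
      a ≤ a' → b ≤ b' → c a b ≤ c a' b' ∧ d a b ≤ d a' b' := by
    intro a ha a' ha' b hb b' hb' haa' hbb'
    obtain ⟨hc, hd, h, hcon⟩ := hcd a ha b hb
    obtain ⟨hc', hd', h', hcon'⟩ := hcd a' ha' b' hb'
    exact le_and_le_of_transmission (F₁ := interfaceFlux G₁ φ₁ δx) (F₂ := interfaceFlux G₂ φ₂ δx)
      (fun v hv => (strictMonoOn_interfaceFlux_left hδx hφ₁mono (hG₁mono v hv)).monotoneOn)
      (fun u hu => strictAntiOn_interfaceFlux_right hδx hφ₁mono (hG₁anti u hu))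
      (fun v hv => strictMonoOn_interfaceFlux_left hδx hφ₂mono (hG₂mono v hv))
      (fun u hu => (strictAntiOn_interfaceFlux_right hδx hφ₂mono (hG₂anti u hu)).antitoneOn)
      (fun _ hc _ hd _ hc' _ hd' => Connects.le_of_lt hπ₁mono hπ₂mono hc hd hc' hd')
      ha ha' hb hb' hc hc' hd hd' haa' hbb' h h' hcon hcon'
  have hcont : ContinuousOn (fun p : ℝ × ℝ => (c p.1 p.2, d p.1 p.2)) (Icc 0 1 ×ˢ Icc 0 1) :=
    continuousOn_of_isClosed_of_unique (isCompact_Icc.prod isCompact_Icc)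
      (isClosed_setOf_transmission (δx := δx) hG₁lip.continuousOn hG₂lip.continuousOn
        hφ₁lip.continuousOn hφ₂lip.continuousOn hπ₁lip.continuousOn hπ₂lip.continuousOn)
      (fun p hp => ⟨(hcd _ hp.1 _ hp.2).1, (hcd _ hp.1 _ hp.2).2.1⟩)
      (fun p hp => ⟨hp, ⟨(hcd _ hp.1 _ hp.2).1, (hcd _ hp.1 _ hp.2).2.1⟩, (hcd _ hp.1 _ hp.2).2.2⟩)
      (fun p hp q hq hpq =>
        Prod.ext_iff.mpr (huniq _ hp.1 _ hp.2 q.1 q.2 hq.1 hq.2 hpq.2.2.1 hpq.2.2.2))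
  exact ⟨continuous_fst.comp_continuousOn hcont, continuous_snd.comp_continuousOn hcont,
    fun b hb a ha a' ha' h => (hmono a ha a' ha' b hb b hb h le_rfl).1,
    fun a ha b hb b' hb' h => (hmono a ha a ha b hb b' hb' le_rfl h).1,
    fun b hb a ha a' ha' h => (hmono a ha a' ha' b hb b hb h le_rfl).2,
    fun a ha b hb b' hb' h => (hmono a ha a ha b hb b' hb' le_rfl h).2⟩

/-- If `(c(a,b), d(a,b))` denotes the unique pair in `[0,1]²` solving the discrete
transmission system, then `(a,b) ↦ c(a,b)` and `(a,b) ↦ d(a,b)` are continuous on `[0,1]²`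
and nondecreasing with respect to each of their arguments. -/
theorem stmt1
    (π₁ π₂ φ₁ φ₂ : ℝ → ℝ) (G₁ G₂ : ℝ → ℝ → ℝ) (δx : ℝ) (hδx : 0 < δx)
    (hπ₁mono : StrictMonoOn π₁ (Icc 0 1)) (hπ₁lip : ∃ K, LipschitzOnWith K π₁ (Icc 0 1))
    (hπ₂mono : StrictMonoOn π₂ (Icc 0 1)) (hπ₂lip : ∃ K, LipschitzOnWith K π₂ (Icc 0 1))
    (hφ₁mono : StrictMonoOn φ₁ (Icc 0 1)) (hφ₁lip : ∃ K, LipschitzOnWith K φ₁ (Icc 0 1))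
    (hφ₁zero : φ₁ 0 = 0)
    (hφ₂mono : StrictMonoOn φ₂ (Icc 0 1)) (hφ₂lip : ∃ K, LipschitzOnWith K φ₂ (Icc 0 1))
    (hφ₂zero : φ₂ 0 = 0)
    (hG₁lip : ∃ K, LipschitzOnWith K (fun p : ℝ × ℝ => G₁ p.1 p.2) (Icc 0 1 ×ˢ Icc 0 1))
    (hG₁mono : ∀ b ∈ Icc (0:ℝ) 1, MonotoneOn (fun a => G₁ a b) (Icc 0 1))
    (hG₁anti : ∀ a ∈ Icc (0:ℝ) 1, AntitoneOn (fun b => G₁ a b) (Icc 0 1))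
    (hG₂lip : ∃ K, LipschitzOnWith K (fun p : ℝ × ℝ => G₂ p.1 p.2) (Icc 0 1 ×ˢ Icc 0 1))
    (hG₂mono : ∀ b ∈ Icc (0:ℝ) 1, MonotoneOn (fun a => G₂ a b) (Icc 0 1))
    (hG₂anti : ∀ a ∈ Icc (0:ℝ) 1, AntitoneOn (fun b => G₂ a b) (Icc 0 1))
    (c d : ℝ → ℝ → ℝ)
    (hcd : ∀ a ∈ Icc (0:ℝ) 1, ∀ b ∈ Icc (0:ℝ) 1,
      c a b ∈ Icc (0:ℝ) 1 ∧ d a b ∈ Icc (0:ℝ) 1 ∧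
      G₁ a (c a b) - 2 * (φ₁ (c a b) - φ₁ a) / δx
        = G₂ (d a b) b - 2 * (φ₂ b - φ₂ (d a b)) / δx ∧
      Connects π₁ π₂ (c a b) (d a b))
    (huniq : ∀ a ∈ Icc (0:ℝ) 1, ∀ b ∈ Icc (0:ℝ) 1, ∀ c' d' : ℝ,
      c' ∈ Icc (0:ℝ) 1 → d' ∈ Icc (0:ℝ) 1 →
      G₁ a c' - 2 * (φ₁ c' - φ₁ a) / δx = G₂ d' b - 2 * (φ₂ b - φ₂ d') / δx →
      Connects π₁ π₂ c' d' → c' = c a b ∧ d' = d a b) :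
    ContinuousOn (fun p : ℝ × ℝ => c p.1 p.2) (Icc 0 1 ×ˢ Icc 0 1) ∧
    ContinuousOn (fun p : ℝ × ℝ => d p.1 p.2) (Icc 0 1 ×ˢ Icc 0 1) ∧
    (∀ b ∈ Icc (0:ℝ) 1, MonotoneOn (fun a => c a b) (Icc 0 1)) ∧
    (∀ a ∈ Icc (0:ℝ) 1, MonotoneOn (fun b => c a b) (Icc 0 1)) ∧
    (∀ b ∈ Icc (0:ℝ) 1, MonotoneOn (fun a => d a b) (Icc 0 1)) ∧
    (∀ a ∈ Icc (0:ℝ) 1, MonotoneOn (fun b => d a b) (Icc 0 1)) :=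
  stmt1_general π₁ π₂ φ₁ φ₂ G₁ G₂ δx hδx hπ₁mono hπ₁lip hπ₂mono hπ₂lip hφ₁mono hφ₁lip hφ₂mono hφ₂lip
    hG₁lip hG₁mono hG₁anti hG₂lip hG₂mono hG₂anti c d hcd huniq
end

section
/- Let (a,b)∈[0,1]² and let (c,d)∈[0,1]² be the unique pair satisfying G_1(a,c)−2(φ_1(c)−φ_1(a))/δx = G_2(d,b)−2(φ_2(b)−φ_2(d))/δx and π̃_1(c)∩π̃_2(d)≠∅, and let F denote this common value, F = G_1(a,c)−2(φ_1(c)−φ_1(a))/δx. Then (π_1(c)−π_2(d))·F ≥ −|q|·|π_1(c)−π_2(d)|. -/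
open Set

/-
The discrete interface flux `F` is nondecreasing in the upstream value and nonincreasing in the
downstream one, on both sides of the interface. If `π₁(c) ≠ π₂(d)`, the connection condition
forces one of the interface values onto a saturated endpoint (`c ∈ {0,1}` or `d ∈ {0,1}`), and
monotonicity compares `F` with `G_i(s,s) = f_i(s) ∈ {0, q}` from the side dictated by the sign
of `π₁(c) - π₂(d)`.
-/

lemma le_of_mem_tildePi {π : ℝ → ℝ} {s p : ℝ} (hp : p ∈ tildePi π s) (hs : s ≠ 0) :
    π s ≤ p := by
  unfold tildePi at hp
  rw [if_neg hs] at hp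
  split_ifs at hp with hs₁
  · exact hs₁ ▸ hp
  · exact (mem_singleton_iff.mp hp).ge

lemma ge_of_mem_tildePi {π : ℝ → ℝ} {s p : ℝ} (hp : p ∈ tildePi π s) (hs : s ≠ 1) :
    p ≤ π s := by
  unfold tildePi at hp
  split_ifs at hp with hs₀
  · exact hs₀ ▸ hp
  · exact (mem_singleton_iff.mp hp).le

lemma Connects.symm {π₁ π₂ : ℝ → ℝ} {c d : ℝ} (h : Connects π₁ π₂ c d) :
    Connects π₂ π₁ d c := by
  unfold Connects at h ⊢
  rwa [inter_comm]

lemma Connects.eq_zero_or_eq_one_of_lt {π₁ π₂ : ℝ → ℝ} {c d : ℝ} (h : Connects π₁ π₂ c d)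
    (hlt : π₂ d < π₁ c) : c = 0 ∨ d = 1 := by
  by_contra! hcd
  obtain ⟨p, hp₁, hp₂⟩ := h
  exact (le_of_mem_tildePi hp₁ hcd.1).not_gt
    ((ge_of_mem_tildePi hp₂ hcd.2).trans_lt hlt)

/-- Both sides of the transmission condition have this form: the flux `F` is
`discreteFlux G₁ φ₁ δx a c = discreteFlux G₂ φ₂ δx d b`. -/
noncomputable def discreteFlux (G : ℝ → ℝ → ℝ) (φ : ℝ → ℝ) (δx x y : ℝ) : ℝ :=
  G x y - 2 * (φ y - φ x) / δx

section discreteFlux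

variable {G : ℝ → ℝ → ℝ} {φ : ℝ → ℝ} {δx : ℝ} {s : Set ℝ}

lemma discreteFlux_self (x : ℝ) : discreteFlux G φ δx x x = G x x := by
  simp [discreteFlux]

lemma discreteFlux_le_discreteFlux_left {x x' y : ℝ} (hG : MonotoneOn (fun x => G x y) s)
    (hφ : MonotoneOn φ s) (hδx : 0 ≤ δx) (hx : x ∈ s) (hx' : x' ∈ s) (hxx' : x ≤ x') :
    discreteFlux G φ δx x y ≤ discreteFlux G φ δx x' y := by
  unfold discreteFlux
  have hφx : φ x ≤ φ x' := hφ hx hx' hxx'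
  gcongr
  exact hG hx hx' hxx'

lemma discreteFlux_le_discreteFlux_right {x y y' : ℝ} (hG : AntitoneOn (fun y => G x y) s)
    (hφ : MonotoneOn φ s) (hδx : 0 ≤ δx) (hy : y ∈ s) (hy' : y' ∈ s) (hyy' : y ≤ y') :
    discreteFlux G φ δx x y' ≤ discreteFlux G φ δx x y := by
  unfold discreteFlux
  have hφy : φ y ≤ φ y' := hφ hy hy' hyy'
  gcongr
  exact hG hy hy' hyy'

end discreteFlux

lemma neg_mul_abs_le_mul_of_bounds {x F r : ℝ} (hpos : 0 < x → -r ≤ F)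
    (hneg : x < 0 → F ≤ r) : -r * |x| ≤ x * F := by
  rcases lt_trichotomy x 0 with hx | rfl | hx
  · rw [abs_of_neg hx]
    nlinarith [hneg hx]
  · simp
  · rw [abs_of_pos hx]
    nlinarith [hpos hx]

theorem stmt2_general
    (π₁ π₂ φ₁ φ₂ : ℝ → ℝ) (G₁ G₂ : ℝ → ℝ → ℝ) (f₁ f₂ : ℝ → ℝ) (q : ℝ)
    (δx : ℝ) (hδx : 0 < δx)
    (hφ₁mono : StrictMonoOn φ₁ (Icc 0 1))
    (hφ₂mono : StrictMonoOn φ₂ (Icc 0 1))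
    (hG₁mono : ∀ b ∈ Icc (0:ℝ) 1, MonotoneOn (fun a => G₁ a b) (Icc 0 1))
    (hG₂anti : ∀ a ∈ Icc (0:ℝ) 1, AntitoneOn (fun b => G₂ a b) (Icc 0 1))
    (hG₁diag : ∀ s ∈ Icc (0:ℝ) 1, G₁ s s = f₁ s)
    (hG₂diag : ∀ s ∈ Icc (0:ℝ) 1, G₂ s s = f₂ s)
    (hf₁0 : f₁ 0 = 0) (hf₂0 : f₂ 0 = 0) (hf₁1 : f₁ 1 = q) (hf₂1 : f₂ 1 = q)
    (a b c d : ℝ)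
    (ha : a ∈ Icc (0:ℝ) 1) (hb : b ∈ Icc (0:ℝ) 1)
    (heq : G₁ a c - 2 * (φ₁ c - φ₁ a) / δx = G₂ d b - 2 * (φ₂ b - φ₂ d) / δx)
    (hconn : Connects π₁ π₂ c d) :
    (π₁ c - π₂ d) * (G₁ a c - 2 * (φ₁ c - φ₁ a) / δx) ≥ -|q| * |π₁ c - π₂ d| := by
  change discreteFlux G₁ φ₁ δx a c = discreteFlux G₂ φ₂ δx d b at heq
  change -|q| * |π₁ c - π₂ d| ≤ (π₁ c - π₂ d) * discreteFlux G₁ φ₁ δx a c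
  have h₀ : (0 : ℝ) ∈ Icc (0 : ℝ) 1 := left_mem_Icc.mpr zero_le_one
  have h₁ : (1 : ℝ) ∈ Icc (0 : ℝ) 1 := right_mem_Icc.mpr zero_le_one
  have hφ₁ := hφ₁mono.monotoneOn
  have hφ₂ := hφ₂mono.monotoneOn
  refine neg_mul_abs_le_mul_of_bounds (fun hpos => ?_) (fun hneg => ?_)
  · rcases hconn.eq_zero_or_eq_one_of_lt (sub_pos.mp hpos) with rfl | rfl
    · calc -|q| ≤ 0 := neg_nonpos.mpr (abs_nonneg q)
        _ = discreteFlux G₁ φ₁ δx 0 0 := by rw [discreteFlux_self, hG₁diag 0 h₀, hf₁0]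
        _ ≤ discreteFlux G₁ φ₁ δx a 0 :=
          discreteFlux_le_discreteFlux_left (hG₁mono 0 h₀) hφ₁ hδx.le h₀ ha ha.1
    · calc -|q| ≤ q := neg_abs_le q
        _ = discreteFlux G₂ φ₂ δx 1 1 := by rw [discreteFlux_self, hG₂diag 1 h₁, hf₂1]
        _ ≤ discreteFlux G₂ φ₂ δx 1 b :=
          discreteFlux_le_discreteFlux_right (hG₂anti 1 h₁) hφ₂ hδx.le hb h₁ hb.2
        _ = _ := heq.symm
  · rcases hconn.symm.eq_zero_or_eq_one_of_lt (sub_neg.mp hneg) with rfl | rfl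
    · calc discreteFlux G₁ φ₁ δx a c = discreteFlux G₂ φ₂ δx 0 b := heq
        _ ≤ discreteFlux G₂ φ₂ δx 0 0 :=
          discreteFlux_le_discreteFlux_right (hG₂anti 0 h₀) hφ₂ hδx.le h₀ hb hb.1
        _ = 0 := by rw [discreteFlux_self, hG₂diag 0 h₀, hf₂0]
        _ ≤ |q| := abs_nonneg q
    · calc discreteFlux G₁ φ₁ δx a 1 ≤ discreteFlux G₁ φ₁ δx 1 1 :=
          discreteFlux_le_discreteFlux_left (hG₁mono 1 h₁) hφ₁ hδx.le ha h₁ ha.2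
        _ = q := by rw [discreteFlux_self, hG₁diag 1 h₁, hf₁1]
        _ ≤ |q| := le_abs_self q

/-- If `(c,d) ∈ [0,1]²` solves the discrete transmission system associated to
`(a,b) ∈ [0,1]²`, and `F = G₁(a,c) - 2(φ₁(c)-φ₁(a))/δx` is the corresponding interface
flux, then `(π₁(c) - π₂(d)) · F ≥ -|q| · |π₁(c) - π₂(d)|`. -/
theorem stmt2
    (π₁ π₂ φ₁ φ₂ : ℝ → ℝ) (G₁ G₂ : ℝ → ℝ → ℝ) (f₁ f₂ : ℝ → ℝ) (q : ℝ)
    (δx : ℝ) (hδx : 0 < δx)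
    (hπ₁mono : StrictMonoOn π₁ (Icc 0 1)) (hπ₁lip : ∃ K, LipschitzOnWith K π₁ (Icc 0 1))
    (hπ₂mono : StrictMonoOn π₂ (Icc 0 1)) (hπ₂lip : ∃ K, LipschitzOnWith K π₂ (Icc 0 1))
    (hφ₁mono : StrictMonoOn φ₁ (Icc 0 1)) (hφ₁lip : ∃ K, LipschitzOnWith K φ₁ (Icc 0 1))
    (hφ₁zero : φ₁ 0 = 0)
    (hφ₂mono : StrictMonoOn φ₂ (Icc 0 1)) (hφ₂lip : ∃ K, LipschitzOnWith K φ₂ (Icc 0 1))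
    (hφ₂zero : φ₂ 0 = 0)
    (hG₁lip : ∃ K, LipschitzOnWith K (fun p : ℝ × ℝ => G₁ p.1 p.2) (Icc 0 1 ×ˢ Icc 0 1))
    (hG₁mono : ∀ b ∈ Icc (0:ℝ) 1, MonotoneOn (fun a => G₁ a b) (Icc 0 1))
    (hG₁anti : ∀ a ∈ Icc (0:ℝ) 1, AntitoneOn (fun b => G₁ a b) (Icc 0 1))
    (hG₂lip : ∃ K, LipschitzOnWith K (fun p : ℝ × ℝ => G₂ p.1 p.2) (Icc 0 1 ×ˢ Icc 0 1))
    (hG₂mono : ∀ b ∈ Icc (0:ℝ) 1, MonotoneOn (fun a => G₂ a b) (Icc 0 1))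
    (hG₂anti : ∀ a ∈ Icc (0:ℝ) 1, AntitoneOn (fun b => G₂ a b) (Icc 0 1))
    (hf₁lip : ∃ K, LipschitzOnWith K f₁ (Icc 0 1))
    (hf₂lip : ∃ K, LipschitzOnWith K f₂ (Icc 0 1))
    (hG₁diag : ∀ s ∈ Icc (0:ℝ) 1, G₁ s s = f₁ s)
    (hG₂diag : ∀ s ∈ Icc (0:ℝ) 1, G₂ s s = f₂ s)
    (hf₁0 : f₁ 0 = 0) (hf₂0 : f₂ 0 = 0) (hf₁1 : f₁ 1 = q) (hf₂1 : f₂ 1 = q)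
    (a b c d : ℝ)
    (ha : a ∈ Icc (0:ℝ) 1) (hb : b ∈ Icc (0:ℝ) 1)
    (hc : c ∈ Icc (0:ℝ) 1) (hd : d ∈ Icc (0:ℝ) 1)
    (heq : G₁ a c - 2 * (φ₁ c - φ₁ a) / δx = G₂ d b - 2 * (φ₂ b - φ₂ d) / δx)
    (hconn : Connects π₁ π₂ c d) :
    (π₁ c - π₂ d) * (G₁ a c - 2 * (φ₁ c - φ₁ a) / δx) ≥ -|q| * |π₁ c - π₂ d| :=
  stmt2_general π₁ π₂ φ₁ φ₂ G₁ G₂ f₁ f₂ q δx hδx hφ₁mono hφ₂mono hG₁mono hG₂anti hG₁diag hG₂diag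
    hf₁0 hf₂0 hf₁1 hf₂1 a b c d ha hb heq hconn
end
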